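/- The Fock-space operators a_i^± (i = 1,…,m+n) defined by the explicit actions on the orthonormal basis of W_p satisfy the defining triple relations of sl(m₁+1,m₂|n₁,n₂): ⟦a_i^ξ, a_j^ξ⟧ = 0 for ξ = ±; ⟦⟦a_i^+, a_j^-⟧, a_k^+⟧ = δ_{jk} a_i^+ + (−1)^{d_i·d_i} δ_{ij} a_k^+; and ⟦⟦a_i^+, a_j^-⟧, a_k^-⟧ = −(−1)^{(d_i+d_j)·d_k} δ_{ik} a_j^- − (−1)^{d_i·d_i} δ_{ij} a_k^-, for all i,j,k ∈ {1,…,m+n}, where ⟦X,Y⟧ = XY − (−1)^{deg X · deg Y} YX. -/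

import Mathlib

/-- Labels of the Fock basis vectors: occupation numbers
`r₁,…,r_{m₁}, l₁,…,l_{m₂}, θ₁,…,θ_{n₁}, λ₁,…,λ_{n₂}`. -/
structure FLabel (m₁ m₂ n₁ n₂ : ℕ) where
  r : Fin m₁ → ℕ
  l : Fin m₂ → ℕ
  th : Fin n₁ → ℕ
  la : Fin n₂ → ℕ

/-- The total occupation number `R = Σr + Σl + Σθ + Σλ`. -/
def FLabel.R {m₁ m₂ n₁ n₂ : ℕ} (x : FLabel m₁ m₂ n₁ n₂) : ℕ :=
  (∑ i, x.r i) + (∑ i, x.l i) + (∑ i, x.th i) + (∑ i, x.la i)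

/-- Valid labels: `θ_i, λ_i ∈ {0,1}` and `R ≤ p`. -/
def FLabel.Valid {m₁ m₂ n₁ n₂ : ℕ} (p : ℕ) (x : FLabel m₁ m₂ n₁ n₂) : Prop :=
  (∀ i, x.th i ≤ 1) ∧ (∀ i, x.la i ≤ 1) ∧ x.R ≤ p

/-- The index set of the orthonormal basis of `W_p`. -/
def FIdx (m₁ m₂ n₁ n₂ p : ℕ) := {x : FLabel m₁ m₂ n₁ n₂ // x.Valid p}

/-- The Fock space `W_p`: the real vector space with basis indexed by `FIdx`,
realized as finitely supported functions; the basis vector at `x` is `Finsupp.single x 1`. -/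
abbrev W (m₁ m₂ n₁ n₂ p : ℕ) := FIdx m₁ m₂ n₁ n₂ p →₀ ℝ

/-- Extend a map defined on basis vectors to a linear operator on `W_p`. -/
noncomputable def extOp {m₁ m₂ n₁ n₂ p : ℕ}
    (g : FIdx m₁ m₂ n₁ n₂ p → W m₁ m₂ n₁ n₂ p) :
    W m₁ m₂ n₁ n₂ p →ₗ[ℝ] W m₁ m₂ n₁ n₂ p :=
  Finsupp.lsum ℝ fun x => LinearMap.toSpanSingleton ℝ _ (g x)

open Classical in
/-- `c` times the basis vector labelled `x'` if `x'` is a valid label, and `0` otherwise. -/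
noncomputable def bvec {m₁ m₂ n₁ n₂ : ℕ} (p : ℕ) (x' : FLabel m₁ m₂ n₁ n₂) (c : ℝ) :
    W m₁ m₂ n₁ n₂ p :=
  if h : x'.Valid p then c • Finsupp.single ⟨x', h⟩ 1 else 0

/-- `b_i^+`. -/
noncomputable def bP {m₁ m₂ n₁ n₂ p : ℕ} (i : Fin m₁) :
    W m₁ m₂ n₁ n₂ p →ₗ[ℝ] W m₁ m₂ n₁ n₂ p :=
  extOp fun x =>
    bvec p { x.1 with r := Function.update x.1.r i (x.1.r i + 1) }
      (Real.sqrt (((x.1.r i + 1) * (p - x.1.R) : ℕ) : ℝ))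

/-- `b_i^-`. -/
noncomputable def bM {m₁ m₂ n₁ n₂ p : ℕ} (i : Fin m₁) :
    W m₁ m₂ n₁ n₂ p →ₗ[ℝ] W m₁ m₂ n₁ n₂ p :=
  extOp fun x =>
    bvec p { x.1 with r := Function.update x.1.r i (x.1.r i - 1) }
      (Real.sqrt ((x.1.r i * (p - x.1.R + 1) : ℕ) : ℝ))

/-- `b̃_i^+`. -/
noncomputable def btP {m₁ m₂ n₁ n₂ p : ℕ} (i : Fin m₂) :
    W m₁ m₂ n₁ n₂ p →ₗ[ℝ] W m₁ m₂ n₁ n₂ p :=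
  extOp fun x =>
    bvec p { x.1 with l := Function.update x.1.l i (x.1.l i + 1) }
      (Real.sqrt (((x.1.l i + 1) * (p - x.1.R) : ℕ) : ℝ))

/-- `b̃_i^-`. -/
noncomputable def btM {m₁ m₂ n₁ n₂ p : ℕ} (i : Fin m₂) :
    W m₁ m₂ n₁ n₂ p →ₗ[ℝ] W m₁ m₂ n₁ n₂ p :=
  extOp fun x =>
    bvec p { x.1 with l := Function.update x.1.l i (x.1.l i - 1) }
      (Real.sqrt ((x.1.l i * (p - x.1.R + 1) : ℕ) : ℝ))

/-- The sign `(−1)^{l₁+⋯+l_{m₂}}`. -/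
noncomputable def sgnl {m₁ m₂ n₁ n₂ : ℕ} (x : FLabel m₁ m₂ n₁ n₂) : ℝ :=
  (-1 : ℝ) ^ (∑ i, x.l i)

/-- The sign `(−1)^{θ₁+⋯+θ_{i−1}}`. -/
noncomputable def sgnth {m₁ m₂ n₁ n₂ : ℕ} (x : FLabel m₁ m₂ n₁ n₂) (i : Fin n₁) : ℝ :=
  (-1 : ℝ) ^ (∑ j ∈ Finset.Iio i, x.th j)

/-- The sign `(−1)^{λ₁+⋯+λ_{i−1}}`. -/
noncomputable def sgnla {m₁ m₂ n₁ n₂ : ℕ} (x : FLabel m₁ m₂ n₁ n₂) (i : Fin n₂) : ℝ :=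
  (-1 : ℝ) ^ (∑ j ∈ Finset.Iio i, x.la j)

/-- `f_i^+`. -/
noncomputable def fP {m₁ m₂ n₁ n₂ p : ℕ} (i : Fin n₁) :
    W m₁ m₂ n₁ n₂ p →ₗ[ℝ] W m₁ m₂ n₁ n₂ p :=
  extOp fun x =>
    bvec p { x.1 with th := Function.update x.1.th i (x.1.th i + 1) }
      (((1 : ℝ) - (x.1.th i : ℝ)) * sgnl x.1 * sgnth x.1 i *
        Real.sqrt ((p - x.1.R : ℕ) : ℝ))

/-- `f_i^-`. -/
noncomputable def fM {m₁ m₂ n₁ n₂ p : ℕ} (i : Fin n₁) :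
    W m₁ m₂ n₁ n₂ p →ₗ[ℝ] W m₁ m₂ n₁ n₂ p :=
  extOp fun x =>
    bvec p { x.1 with th := Function.update x.1.th i (x.1.th i - 1) }
      ((x.1.th i : ℝ) * sgnl x.1 * sgnth x.1 i *
        Real.sqrt ((p - x.1.R + 1 : ℕ) : ℝ))

/-- `f̃_i^+`. -/
noncomputable def ftP {m₁ m₂ n₁ n₂ p : ℕ} (i : Fin n₂) :
    W m₁ m₂ n₁ n₂ p →ₗ[ℝ] W m₁ m₂ n₁ n₂ p :=
  extOp fun x =>
    bvec p { x.1 with la := Function.update x.1.la i (x.1.la i + 1) }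
      (((1 : ℝ) - (x.1.la i : ℝ)) * sgnl x.1 * sgnla x.1 i *
        Real.sqrt ((p - x.1.R : ℕ) : ℝ))

/-- `f̃_i^-`. -/
noncomputable def ftM {m₁ m₂ n₁ n₂ p : ℕ} (i : Fin n₂) :
    W m₁ m₂ n₁ n₂ p →ₗ[ℝ] W m₁ m₂ n₁ n₂ p :=
  extOp fun x =>
    bvec p { x.1 with la := Function.update x.1.la i (x.1.la i - 1) }
      ((x.1.la i : ℝ) * sgnl x.1 * sgnla x.1 i *
        Real.sqrt ((p - x.1.R + 1 : ℕ) : ℝ))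

/-- The creation operators `a_i^+`, `i = 1, …, m+n` (here indexed by `Fin (m+n)`). -/
noncomputable def aP {m₁ m₂ n₁ n₂ p : ℕ} (i : Fin (m₁+m₂+n₁+n₂)) :
    W m₁ m₂ n₁ n₂ p →ₗ[ℝ] W m₁ m₂ n₁ n₂ p :=
  if h1 : i.val < m₁ then bP ⟨i.val, h1⟩
  else if h2 : i.val < m₁ + m₂ then btP ⟨i.val - m₁, by omega⟩
  else if h3 : i.val < m₁ + m₂ + n₁ then fP ⟨i.val - (m₁ + m₂), by omega⟩
  else ftP ⟨i.val - (m₁ + m₂ + n₁), by have := i.isLt; omega⟩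

/-- The annihilation operators `a_i^-`, `i = 1, …, m+n` (here indexed by `Fin (m+n)`). -/
noncomputable def aM {m₁ m₂ n₁ n₂ p : ℕ} (i : Fin (m₁+m₂+n₁+n₂)) :
    W m₁ m₂ n₁ n₂ p →ₗ[ℝ] W m₁ m₂ n₁ n₂ p :=
  if h1 : i.val < m₁ then bM ⟨i.val, h1⟩
  else if h2 : i.val < m₁ + m₂ then btM ⟨i.val - m₁, by omega⟩
  else if h3 : i.val < m₁ + m₂ + n₁ then fM ⟨i.val - (m₁ + m₂), by omega⟩
  else ftM ⟨i.val - (m₁ + m₂ + n₁), by have := i.isLt; omega⟩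

/-- The degree `d_i ∈ ℤ₂×ℤ₂` of `a_i^±`. -/
def deg {m₁ m₂ n₁ n₂ : ℕ} (i : Fin (m₁+m₂+n₁+n₂)) : ZMod 2 × ZMod 2 :=
  if i.val < m₁ then (0, 0)
  else if i.val < m₁ + m₂ then (1, 1)
  else if i.val < m₁ + m₂ + n₁ then (1, 0)
  else (0, 1)

/-- The sign `(−1)^{a·b}` with `a·b = a₁b₁ + a₂b₂ ∈ ℤ₂`. -/
noncomputable def sgn (a b : ZMod 2 × ZMod 2) : ℝ :=
  (-1 : ℝ) ^ (a.1 * b.1 + a.2 * b.2 : ZMod 2).val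

/-- The bracket `⟦X,Y⟧ = X∘Y − (−1)^{a·b} Y∘X` of operators of degrees `a`, `b`. -/
noncomputable def bb {m₁ m₂ n₁ n₂ p : ℕ} (a b : ZMod 2 × ZMod 2)
    (X Y : W m₁ m₂ n₁ n₂ p →ₗ[ℝ] W m₁ m₂ n₁ n₂ p) :
    W m₁ m₂ n₁ n₂ p →ₗ[ℝ] W m₁ m₂ n₁ n₂ p :=
  X ∘ₗ Y - sgn a b • (Y ∘ₗ X)

/-!
On `W_p` the operators factor as `a_i^+ = c_i √(p − N)` and `a_i^- = √(p − N) a_i`, where `N` is the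
total occupation number and `c_i`, `a_i` are ordinary bosonic and fermionic creation and
annihilation operators (cut off at `N = p`), the fermionic ones carrying the Klein factors
`(−1)^{l₁+⋯+l_{m₂}} (−1)^{θ₁+⋯+θ_{i−1}}`. Because of these factors two distinct modes `i`, `j`
commute up to the sign `(−1)^{d_i·d_j}`, so `c_i`, `a_i` satisfy the graded canonical commutation
relations wherever `N < p`; moreover `c_i` and `a_i` shift `N` by `±1`. The triple relations then
follow by a purely algebraic computation (`CutoffCCR`): the factors `√(p − N)` turn
`⟦a_i^+, a_j^-⟧` into `c_i a_j − δ_{ij} (−1)^{d_i·d_i} (p − N)`, and the triple brackets reduce to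
the commutation relations of `c` and `a`.
-/

lemma Finset.sum_update_add {ι M : Type*} [DecidableEq ι] [AddCommMonoid M] {s : Finset ι} {a : ι}
    (ha : a ∈ s) (f : ι → M) (v : M) :
    ∑ t ∈ s, Function.update f a v t + f a = ∑ t ∈ s, f t + v := by
  rw [Finset.sum_update_of_mem ha, ← Finset.add_sum_erase s f ha, Finset.sdiff_singleton_eq_erase]
  abel

lemma neg_one_pow_eq_of_add_eq {R : Type*} [CommRing R] {a b c d : ℕ} (h : a + c = b + d) :
    (-1 : R) ^ a = (-1) ^ (d + c) * (-1) ^ b := by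
  have hc : ((-1 : R) ^ c) ^ 2 = 1 := by rw [← pow_mul, mul_comm, pow_mul]; simp
  calc (-1 : R) ^ a = (-1) ^ (a + c) * (-1) ^ c := by rw [pow_add, mul_assoc, ← sq, hc, mul_one]
    _ = _ := by rw [h]; ring

lemma sgn_eq_ite (a b : ZMod 2 × ZMod 2) :
    sgn a b = if a.1 * b.1 + a.2 * b.2 = 0 then 1 else -1 := by
  unfold sgn
  generalize a.1 * b.1 + a.2 * b.2 = z
  rcases (by decide : ∀ z : ZMod 2, z = 0 ∨ z = 1) z with rfl | rfl
  · simp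
  · simp [ZMod.val_one]

lemma sgn_comm (a b : ZMod 2 × ZMod 2) : sgn a b = sgn b a := by
  rw [sgn, sgn, mul_comm a.1, mul_comm a.2]

lemma sgn_mul_self (a b : ZMod 2 × ZMod 2) : sgn a b * sgn a b = 1 := by
  rw [sgn, ← pow_add, ← two_mul, pow_mul]; simp

lemma sgn_add_left (a b c : ZMod 2 × ZMod 2) : sgn (a + b) c = sgn a c * sgn b c := by
  rw [sgn, sgn, sgn, ← pow_add, neg_one_pow_eq_pow_mod_two (_ + _), ← ZMod.val_add, Prod.fst_add,
    Prod.snd_add]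
  ring_nf

section

variable {A : Type*} [Ring A] [Algebra ℝ A] {ι : Type*} [DecidableEq ι]

def gradedBracket (ε : ℝ) (X Y : A) : A := X * Y - ε • (Y * X)

/-- In the Fock model `c`, `a` are the creation and annihilation operators, `g = p − N`,
`q = √(p − N)` and `q₁ = √(p − N − 1)`, where `N` is the total occupation number. -/
structure CutoffCCR (s : ι → ι → ℝ) (c a : ι → A) (q q₁ g : A) : Prop where
  sign_mul_self : ∀ i j, s i j * s i j = 1
  sign_comm : ∀ i j, s i j = s j i
  q_mul_q : q * q = g
  q_mul_c : ∀ i, q * c i = c i * q₁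
  a_mul_q : ∀ i, a i * q = q₁ * a i
  commute_q_ac : ∀ i j, Commute q (a j * c i)
  g_mul_c : ∀ i, g * c i = c i * g - c i
  g_mul_a : ∀ i, g * a i = a i * g + a i
  c_mul_c : ∀ i j, c i * c j = s i j • (c j * c i)
  a_mul_a : ∀ i j, a i * a j = s i j • (a j * a i)
  ccr : ∀ i j, (a j * c i - s i j • (c i * a j)) * q = (if i = j then 1 else 0 : ℝ) • q

namespace CutoffCCR

variable {s : ι → ι → ℝ} {c a : ι → A} {q q₁ g : A}

lemma ccr_g (h : CutoffCCR s c a q q₁ g) (i j : ι) :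
    a j * c i * g - s i j • (c i * a j * g) = (if i = j then 1 else 0 : ℝ) • g := by
  calc a j * c i * g - s i j • (c i * a j * g)
      = (a j * c i - s i j • (c i * a j)) * q * q := by rw [← h.q_mul_q]; noncomm_ring
    _ = _ := by rw [h.ccr, smul_mul_assoc, h.q_mul_q]

lemma commute_q_ca (h : CutoffCCR s c a q q₁ g) (i j : ι) : Commute q (c i * a j) := by
  rw [Commute, SemiconjBy, ← mul_assoc, h.q_mul_c, mul_assoc, ← h.a_mul_q, mul_assoc]

lemma commute_q_g (h : CutoffCCR s c a q q₁ g) : Commute q g := by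
  rw [Commute, SemiconjBy, ← h.q_mul_q, mul_assoc]

lemma gradedBracket_creation (h : CutoffCCR s c a q q₁ g) (i j : ι) :
    gradedBracket (s i j) (c i * q) (c j * q) = 0 := by
  have key : ∀ i j, c i * q * (c j * q) = c i * c j * (q₁ * q) := fun i j => by
    rw [mul_assoc, ← mul_assoc q, h.q_mul_c]; noncomm_ring
  rw [gradedBracket, key, key, h.c_mul_c i j, smul_mul_assoc, sub_self]

lemma gradedBracket_annihilation (h : CutoffCCR s c a q q₁ g) (i j : ι) :
    gradedBracket (s i j) (q * a i) (q * a j) = 0 := by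
  have key : ∀ i j, q * a i * (q * a j) = q * q₁ * (a i * a j) := fun i j => by
    rw [mul_assoc, ← mul_assoc (a i), h.a_mul_q]; noncomm_ring
  rw [gradedBracket, key, key, h.a_mul_a i j, mul_smul_comm, sub_self]

lemma gradedBracket_creation_annihilation (h : CutoffCCR s c a q q₁ g) (i j : ι) :
    gradedBracket (s i j) (c i * q) (q * a j) = c i * a j - (if i = j then s i i else 0) • g := by
  have hca : c i * q * (q * a j) = c i * a j * g + c i * a j := by
    rw [mul_assoc, ← mul_assoc q, h.q_mul_q, h.g_mul_a]; noncomm_ring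
  have hac : q * a j * (c i * q) = a j * c i * g := by
    calc q * a j * (c i * q) = q * (a j * c i) * q := by noncomm_ring
      _ = a j * c i * g := by rw [(h.commute_q_ac i j).eq, mul_assoc, h.q_mul_q]
  have hccr := h.ccr_g i j
  rw [gradedBracket, hca, hac]
  split_ifs at hccr ⊢ with hij
  · subst hij
    linear_combination (norm := module) (-(s i i)) • hccr - h.sign_mul_self i i • (c i * a i * g)
  · linear_combination (norm := module) (-(s i j)) • hccr - h.sign_mul_self i j • (c i * a j * g)

lemma gradedBracket_gradedBracket_creation (h : CutoffCCR s c a q q₁ g) (i j k : ι) :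
    gradedBracket (s i k * s j k) (gradedBracket (s i j) (c i * q) (q * a j)) (c k * q) =
      (if j = k then 1 else 0 : ℝ) • (c i * q) +
        s i i • ((if i = j then 1 else 0 : ℝ) • (c k * q)) := by
  rw [h.gradedBracket_creation_annihilation]
  set d : ℝ := if i = j then s i i else 0
  have hqE : Commute q (c i * a j - d • g) :=
    (h.commute_q_ca i j).sub_right (h.commute_q_g.smul_right d)
  have hEk : (c i * a j - d • g) * (c k * q) =
      c i * a j * c k * q - d • (c k * g * q) + d • (c k * q) := by
    calc (c i * a j - d • g) * (c k * q) = c i * a j * c k * q - d • (g * c k * q) := by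
          noncomm_ring
      _ = _ := by rw [h.g_mul_c, sub_mul, smul_sub]; abel
  have hkE : c k * q * (c i * a j - d • g) = s k i • (c i * c k * a j * q) - d • (c k * g * q) := by
    calc c k * q * (c i * a j - d • g) = c k * c i * a j * q - d • (c k * g * q) := by
          rw [mul_assoc, hqE.eq]; noncomm_ring
      _ = _ := by rw [h.c_mul_c k i]; noncomm_ring
  have hccr : c i * a j * c k * q - s k j • (c i * c k * a j * q) =
      (if k = j then 1 else 0 : ℝ) • (c i * q) := by
    calc c i * a j * c k * q - s k j • (c i * c k * a j * q)
        = c i * ((a j * c k - s k j • (c k * a j)) * q) := by noncomm_ring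
      _ = _ := by rw [h.ccr, mul_smul_comm]
  have hsign : s i k * s j k * s k i = s k j := by
    rw [h.sign_comm k i, h.sign_comm k j]; linear_combination s j k * h.sign_mul_self i k
  have hd : d * (s i k * s j k) = d := by
    simp only [d]; split_ifs with hij
    · rw [hij, h.sign_mul_self, mul_one]
    · rw [zero_mul]
  have hσ : s i i * (if i = j then 1 else 0 : ℝ) = d := by simp only [d]; split_ifs <;> ring
  have hδ : (if k = j then 1 else 0 : ℝ) = if j = k then 1 else 0 := by simp only [eq_comm]
  rw [gradedBracket, hEk, hkE]
  linear_combination (norm := module) hccr - hsign • (c i * c k * a j * q) + hd • (c k * g * q) -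
    hσ • (c k * q) + hδ • (c i * q)

lemma gradedBracket_gradedBracket_annihilation (h : CutoffCCR s c a q q₁ g) (i j k : ι) :
    gradedBracket (s i k * s j k) (gradedBracket (s i j) (c i * q) (q * a j)) (q * a k) =
      -((s i k * s j k) • ((if i = k then 1 else 0 : ℝ) • (q * a j))) -
        s i i • ((if i = j then 1 else 0 : ℝ) • (q * a k)) := by
  rw [h.gradedBracket_creation_annihilation]
  set d : ℝ := if i = j then s i i else 0
  have hqE : Commute q (c i * a j - d • g) :=
    (h.commute_q_ca i j).sub_right (h.commute_q_g.smul_right d)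
  have hEk : (c i * a j - d • g) * (q * a k) =
      s j k • (q * c i * a k * a j) - d • (q * a k * g) - d • (q * a k) := by
    calc (c i * a j - d • g) * (q * a k) = q * c i * (a j * a k) - d • (q * (g * a k)) := by
          rw [← mul_assoc, ← hqE.eq]; noncomm_ring
      _ = _ := by rw [h.a_mul_a, h.g_mul_a, mul_add, smul_add]; noncomm_ring
  have hkE : q * a k * (c i * a j - d • g) = q * a k * c i * a j - d • (q * a k * g) := by
    noncomm_ring
  have hccr : q * a k * c i * a j - s i k • (q * c i * a k * a j) =
      (if i = k then 1 else 0 : ℝ) • (q * a j) := by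
    calc q * a k * c i * a j - s i k • (q * c i * a k * a j)
        = q * (a k * c i - s i k • (c i * a k)) * a j := by noncomm_ring
      _ = (a k * c i - s i k • (c i * a k)) * q * a j := by
          rw [((h.commute_q_ac i k).sub_right ((h.commute_q_ca i k).smul_right _)).eq]
      _ = _ := by rw [h.ccr, smul_mul_assoc]
  have hsign : s i k * s j k * s i k = s j k := by
    linear_combination s j k * h.sign_mul_self i k
  have hd : d * (s i k * s j k) = d := by
    simp only [d]; split_ifs with hij
    · rw [hij, h.sign_mul_self, mul_one]
    · rw [zero_mul]
  have hσ : s i i * (if i = j then 1 else 0 : ℝ) = d := by simp only [d]; split_ifs <;> ring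
  rw [gradedBracket, hEk, hkE]
  linear_combination (norm := module) (-(s i k * s j k)) • hccr - hsign • (q * c i * a k * a j) +
    hd • (q * a k * g) + hσ • (q * a k)

end CutoffCCR

end

inductive FMode (m₁ m₂ n₁ n₂ : ℕ) where
  | r : Fin m₁ → FMode m₁ m₂ n₁ n₂
  | l : Fin m₂ → FMode m₁ m₂ n₁ n₂
  | th : Fin n₁ → FMode m₁ m₂ n₁ n₂
  | la : Fin n₂ → FMode m₁ m₂ n₁ n₂

section Labels

variable {m₁ m₂ n₁ n₂ p : ℕ}

namespace FMode

def deg : FMode m₁ m₂ n₁ n₂ → ZMod 2 × ZMod 2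
  | r _ => (0, 0)
  | l _ => (1, 1)
  | th _ => (1, 0)
  | la _ => (0, 1)

def isFermion : FMode m₁ m₂ n₁ n₂ → Bool
  | th _ | la _ => true
  | r _ | l _ => false

/-- The factor by which the Klein sign of mode `μ` changes when the occupation of mode `ν`
changes by one. -/
def crossSign : FMode m₁ m₂ n₁ n₂ → FMode m₁ m₂ n₁ n₂ → ℝ
  | .th _, .l _ => -1
  | .la _, .l _ => -1
  | .th a, .th b => if b < a then -1 else 1
  | .la a, .la b => if b < a then -1 else 1
  | _, _ => 1

variable {μ ν : FMode m₁ m₂ n₁ n₂}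

lemma sgn_deg_self : sgn μ.deg μ.deg = if μ.isFermion then -1 else 1 := by
  cases μ <;> simp +decide [sgn_eq_ite, deg, isFermion]

lemma crossSign_of_not_isFermion (hμ : μ.isFermion = false) : μ.crossSign ν = 1 := by
  cases μ <;> cases ν <;> simp_all [isFermion, crossSign]

@[simp] lemma crossSign_self : μ.crossSign μ = 1 := by
  cases μ <;> simp [crossSign]

lemma crossSign_mul_self : μ.crossSign ν * μ.crossSign ν = 1 := by
  cases μ <;> cases ν <;> simp only [crossSign] <;> (try split_ifs) <;> norm_num

lemma crossSign_pow_of_odd {n : ℕ} (hn : Odd n) : μ.crossSign ν ^ n = μ.crossSign ν := by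
  obtain ⟨k, rfl⟩ := hn
  rw [pow_succ, pow_mul, sq, crossSign_mul_self, one_pow, one_mul]

lemma crossSign_mul_crossSign (h : μ ≠ ν) : μ.crossSign ν * ν.crossSign μ = sgn μ.deg ν.deg := by
  cases μ <;> cases ν <;>
    simp +decide only [crossSign, deg, sgn_eq_ite] <;>
    first
    | (norm_num; done)
    | rename_i a b
      obtain hab | hab := (show b ≠ a by rintro rfl; exact h rfl).lt_or_gt <;>
        simp [hab, hab.not_gt]

end FMode

def mode (i : Fin (m₁+m₂+n₁+n₂)) : FMode m₁ m₂ n₁ n₂ :=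
  if h1 : i.val < m₁ then .r ⟨i, h1⟩
  else if h2 : i.val < m₁ + m₂ then .l ⟨i - m₁, by omega⟩
  else if h3 : i.val < m₁ + m₂ + n₁ then .th ⟨i - (m₁ + m₂), by omega⟩
  else .la ⟨i - (m₁ + m₂ + n₁), by omega⟩

lemma mode_injective : Function.Injective (mode (m₁ := m₁) (m₂ := m₂) (n₁ := n₁) (n₂ := n₂)) := by
  intro i j h
  unfold mode at h
  split_ifs at h <;> simp only [FMode.r.injEq, FMode.l.injEq, FMode.th.injEq, FMode.la.injEq,
    Fin.ext_iff] at h <;> omega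

lemma deg_eq_deg_mode (i : Fin (m₁+m₂+n₁+n₂)) : deg i = (mode i).deg := by
  unfold deg mode
  split_ifs <;> rfl

namespace FLabel

def occ (x : FLabel m₁ m₂ n₁ n₂) : FMode m₁ m₂ n₁ n₂ → ℕ
  | .r a => x.r a
  | .l a => x.l a
  | .th a => x.th a
  | .la a => x.la a

def setOcc (x : FLabel m₁ m₂ n₁ n₂) : FMode m₁ m₂ n₁ n₂ → ℕ → FLabel m₁ m₂ n₁ n₂
  | .r a, v => { x with r := Function.update x.r a v }
  | .l a, v => { x with l := Function.update x.l a v }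
  | .th a, v => { x with th := Function.update x.th a v }
  | .la a, v => { x with la := Function.update x.la a v }

def raise (x : FLabel m₁ m₂ n₁ n₂) (μ : FMode m₁ m₂ n₁ n₂) : FLabel m₁ m₂ n₁ n₂ :=
  x.setOcc μ (x.occ μ + 1)

def lower (x : FLabel m₁ m₂ n₁ n₂) (μ : FMode m₁ m₂ n₁ n₂) : FLabel m₁ m₂ n₁ n₂ :=
  x.setOcc μ (x.occ μ - 1)

variable {x : FLabel m₁ m₂ n₁ n₂} {μ ν : FMode m₁ m₂ n₁ n₂}

@[simp] lemma occ_setOcc_self (v : ℕ) : (x.setOcc μ v).occ μ = v := by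
  cases μ <;> simp [occ, setOcc]

lemma occ_setOcc_of_ne (h : ν ≠ μ) (v : ℕ) : (x.setOcc μ v).occ ν = x.occ ν := by
  cases μ <;> cases ν <;> simp_all [occ, setOcc, Function.update_of_ne]

lemma setOcc_setOcc_comm (h : μ ≠ ν) (v w : ℕ) :
    (x.setOcc μ v).setOcc ν w = (x.setOcc ν w).setOcc μ v := by
  cases μ <;> cases ν <;> simp_all [setOcc] <;> exact Function.update_comm ‹_› _ _ _

@[simp] lemma setOcc_setOcc_self (v w : ℕ) : (x.setOcc μ v).setOcc μ w = x.setOcc μ w := by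
  cases μ <;> simp [setOcc]

@[simp] lemma setOcc_occ_self : x.setOcc μ (x.occ μ) = x := by
  cases μ <;> simp [setOcc, occ]

open Finset in
lemma R_setOcc (v : ℕ) : (x.setOcc μ v).R + x.occ μ = x.R + v := by
  cases μ with
  | r a => have := sum_update_add (mem_univ a) x.r v; simp only [R, setOcc, occ]; omega
  | l a => have := sum_update_add (mem_univ a) x.l v; simp only [R, setOcc, occ]; omega
  | th a => have := sum_update_add (mem_univ a) x.th v; simp only [R, setOcc, occ]; omega
  | la a => have := sum_update_add (mem_univ a) x.la v; simp only [R, setOcc, occ]; omega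

@[simp] lemma occ_raise_self : (x.raise μ).occ μ = x.occ μ + 1 := occ_setOcc_self _

@[simp] lemma occ_lower_self : (x.lower μ).occ μ = x.occ μ - 1 := occ_setOcc_self _

lemma occ_lower_of_ne (h : ν ≠ μ) : (x.lower μ).occ ν = x.occ ν := occ_setOcc_of_ne h _

@[simp] lemma lower_raise : (x.raise μ).lower μ = x := by
  simp [raise, lower]

lemma raise_lower (h : x.occ μ ≠ 0) : (x.lower μ).raise μ = x := by
  simp [raise, lower, Nat.sub_add_cancel (Nat.one_le_iff_ne_zero.2 h)]

lemma raise_raise_comm (h : μ ≠ ν) : (x.raise μ).raise ν = (x.raise ν).raise μ := by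
  simp only [raise, occ_setOcc_of_ne h, occ_setOcc_of_ne h.symm, setOcc_setOcc_comm h]

lemma lower_lower_comm (h : μ ≠ ν) : (x.lower μ).lower ν = (x.lower ν).lower μ := by
  simp only [lower, occ_setOcc_of_ne h, occ_setOcc_of_ne h.symm, setOcc_setOcc_comm h]

lemma lower_raise_comm (h : μ ≠ ν) : (x.raise μ).lower ν = (x.lower ν).raise μ := by
  simp only [raise, lower, occ_setOcc_of_ne h, occ_setOcc_of_ne h.symm, setOcc_setOcc_comm h]

lemma R_raise : (x.raise μ).R = x.R + 1 := by
  have := x.R_setOcc (μ := μ) (x.occ μ + 1); unfold raise; omega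

lemma R_lower (h : x.occ μ ≠ 0) : (x.lower μ).R + 1 = x.R := by
  have := x.R_setOcc (μ := μ) (x.occ μ - 1); unfold lower; omega

lemma R_lower_le : (x.lower μ).R ≤ x.R := by
  have := x.R_setOcc (μ := μ) (x.occ μ - 1); unfold lower; omega

lemma occ_le_one (hx : x.Valid p) (hμ : μ.isFermion) : x.occ μ ≤ 1 := by
  cases μ <;> simp only [FMode.isFermion, Bool.false_eq_true] at hμ
  · exact hx.1 _
  · exact hx.2.1 _

lemma valid_setOcc (hx : x.Valid p) {v : ℕ} (hv : μ.isFermion → v ≤ 1)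
    (hR : x.R + v ≤ p + x.occ μ) : (x.setOcc μ v).Valid p := by
  have hR' : (x.setOcc μ v).R ≤ p := by have := x.R_setOcc (μ := μ) v; omega
  obtain ⟨hth, hla, -⟩ := hx
  cases μ <;>
    refine ⟨fun b => ?_, fun b => ?_, hR'⟩ <;>
    simp only [setOcc, FMode.isFermion, Function.update_apply] at hv ⊢ <;>
    first | exact hth b | exact hla b | (split_ifs <;> simp_all)

lemma valid_lower (hx : x.Valid p) : (x.lower μ).Valid p :=
  valid_setOcc hx (fun hμ => (Nat.sub_le _ 1).trans (occ_le_one hx hμ)) (by have := hx.2.2; omega)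

lemma valid_raise (hx : x.Valid p) (hR : x.R < p) (hμ : μ.isFermion → x.occ μ = 0) :
    (x.raise μ).Valid p :=
  valid_setOcc hx (fun h => by simp [hμ h]) (by omega)

def kleinExp (x : FLabel m₁ m₂ n₁ n₂) : FMode m₁ m₂ n₁ n₂ → ℕ
  | .th a => ∑ t, x.l t + ∑ t ∈ Finset.Iio a, x.th t
  | .la a => ∑ t, x.l t + ∑ t ∈ Finset.Iio a, x.la t
  | .r _ | .l _ => 0

def klein (x : FLabel m₁ m₂ n₁ n₂) (μ : FMode m₁ m₂ n₁ n₂) : ℝ := (-1) ^ x.kleinExp μ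

lemma klein_setOcc (v : ℕ) :
    (x.setOcc ν v).klein μ = μ.crossSign ν ^ (v + x.occ ν) * x.klein μ := by
  rcases μ with a | a | a | a <;> rcases ν with b | b | b | b <;>
    simp only [klein, kleinExp, setOcc, occ, FMode.crossSign, one_pow, one_mul]
  · exact neg_one_pow_eq_of_add_eq (by linarith [Finset.sum_update_add (Finset.mem_univ b) x.l v])
  · split_ifs with hba
    · exact neg_one_pow_eq_of_add_eq
        (by linarith [Finset.sum_update_add (Finset.mem_Iio.2 hba) x.th v])
    · rw [Finset.sum_update_of_notMem (by simpa using hba), one_pow, one_mul]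
  · exact neg_one_pow_eq_of_add_eq (by linarith [Finset.sum_update_add (Finset.mem_univ b) x.l v])
  · split_ifs with hba
    · exact neg_one_pow_eq_of_add_eq
        (by linarith [Finset.sum_update_add (Finset.mem_Iio.2 hba) x.la v])
    · rw [Finset.sum_update_of_notMem (by simpa using hba), one_pow, one_mul]

lemma klein_mul_self : x.klein μ * x.klein μ = 1 := by
  rw [klein, ← pow_add, ← two_mul, pow_mul]; simp

lemma klein_setOcc_self (v : ℕ) : (x.setOcc μ v).klein μ = x.klein μ := by
  rw [klein_setOcc, FMode.crossSign_self, one_pow, one_mul]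

noncomputable def raiseWeight (x : FLabel m₁ m₂ n₁ n₂) (μ : FMode m₁ m₂ n₁ n₂) : ℝ :=
  if μ.isFermion then (1 - x.occ μ) * x.klein μ else √(x.occ μ + 1)

noncomputable def lowerWeight (x : FLabel m₁ m₂ n₁ n₂) (μ : FMode m₁ m₂ n₁ n₂) : ℝ :=
  if μ.isFermion then x.occ μ * x.klein μ else √(x.occ μ)

lemma raiseWeight_setOcc_of_ne (h : μ ≠ ν) (v : ℕ) :
    (x.setOcc ν v).raiseWeight μ = μ.crossSign ν ^ (v + x.occ ν) * x.raiseWeight μ := by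
  unfold raiseWeight
  rw [occ_setOcc_of_ne h, klein_setOcc]
  split_ifs with hμ
  · ring
  · rw [FMode.crossSign_of_not_isFermion (by simpa using hμ), one_pow, one_mul]

lemma lowerWeight_setOcc_of_ne (h : μ ≠ ν) (v : ℕ) :
    (x.setOcc ν v).lowerWeight μ = μ.crossSign ν ^ (v + x.occ ν) * x.lowerWeight μ := by
  unfold lowerWeight
  rw [occ_setOcc_of_ne h, klein_setOcc]
  split_ifs with hμ
  · ring
  · rw [FMode.crossSign_of_not_isFermion (by simpa using hμ), one_pow, one_mul]

lemma raiseWeight_raise_of_ne (h : μ ≠ ν) :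
    (x.raise ν).raiseWeight μ = μ.crossSign ν * x.raiseWeight μ := by
  rw [raise, raiseWeight_setOcc_of_ne h, FMode.crossSign_pow_of_odd ⟨x.occ ν, by ring⟩]

lemma lowerWeight_raise_of_ne (h : μ ≠ ν) :
    (x.raise ν).lowerWeight μ = μ.crossSign ν * x.lowerWeight μ := by
  rw [raise, lowerWeight_setOcc_of_ne h, FMode.crossSign_pow_of_odd ⟨x.occ ν, by ring⟩]

lemma raiseWeight_lower_of_ne (h : μ ≠ ν) (hν : x.occ ν ≠ 0) :
    (x.lower ν).raiseWeight μ = μ.crossSign ν * x.raiseWeight μ := by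
  rw [lower, raiseWeight_setOcc_of_ne h, FMode.crossSign_pow_of_odd ⟨x.occ ν - 1, by omega⟩]

lemma lowerWeight_lower_of_ne (h : μ ≠ ν) (hν : x.occ ν ≠ 0) :
    (x.lower ν).lowerWeight μ = μ.crossSign ν * x.lowerWeight μ := by
  rw [lower, lowerWeight_setOcc_of_ne h, FMode.crossSign_pow_of_odd ⟨x.occ ν - 1, by omega⟩]

lemma lowerWeight_eq_zero (h : x.occ μ = 0) : x.lowerWeight μ = 0 := by
  simp [lowerWeight, h]

lemma occ_eq_zero_or_one (hx : x.Valid p) (hμ : μ.isFermion) : x.occ μ = 0 ∨ x.occ μ = 1 := by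
  have := occ_le_one hx hμ; omega

lemma occ_eq_zero_of_raiseWeight_ne_zero (hx : x.Valid p) (hμ : μ.isFermion)
    (h : x.raiseWeight μ ≠ 0) : x.occ μ = 0 := by
  refine (occ_eq_zero_or_one hx hμ).resolve_right fun h1 => h ?_
  simp [raiseWeight, hμ, h1]

lemma raiseWeight_mul_lowerWeight_raise (hx : x.Valid p) :
    x.raiseWeight μ * (x.raise μ).lowerWeight μ = 1 + sgn μ.deg μ.deg * x.occ μ := by
  rw [FMode.sgn_deg_self, lowerWeight, occ_raise_self, raise, klein_setOcc_self, raiseWeight]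
  split_ifs with hμ
  · obtain h | h := occ_eq_zero_or_one hx hμ <;> simp only [h] <;> push_cast <;>
      first | ring1 | linear_combination klein_mul_self
  · push_cast
    rw [Real.mul_self_sqrt (by positivity)]
    ring

lemma lowerWeight_mul_raiseWeight_lower (hx : x.Valid p) :
    x.lowerWeight μ * (x.lower μ).raiseWeight μ = x.occ μ := by
  rw [raiseWeight, occ_lower_self, lower, klein_setOcc_self, lowerWeight]
  obtain h | h := Nat.eq_zero_or_pos (x.occ μ)
  · simp [h]
  split_ifs with hμ
  · obtain h | h := occ_eq_zero_or_one hx hμ <;> simp only [h] <;> push_cast <;>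
      first | ring1 | linear_combination klein_mul_self
  · rw [Nat.cast_sub h, Nat.cast_one, sub_add_cancel, Real.mul_self_sqrt (by positivity)]

lemma raiseWeight_mul_raiseWeight_raise (hx : x.Valid p) (hμ : μ.isFermion) :
    x.raiseWeight μ * (x.raise μ).raiseWeight μ = 0 := by
  unfold raiseWeight
  rw [occ_raise_self, raise, klein_setOcc_self]
  obtain h | h := occ_eq_zero_or_one hx hμ <;> simp [h, hμ]

lemma lowerWeight_mul_lowerWeight_lower (hx : x.Valid p) (hμ : μ.isFermion) :
    x.lowerWeight μ * (x.lower μ).lowerWeight μ = 0 := by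
  unfold lowerWeight
  rw [occ_lower_self, lower, klein_setOcc_self]
  obtain h | h := occ_eq_zero_or_one hx hμ <;> simp [h, hμ]

end FLabel

end Labels

namespace Fock

variable {m₁ m₂ n₁ n₂ p : ℕ} {μ ν : FMode m₁ m₂ n₁ n₂}

lemma bvec_val (z : FIdx m₁ m₂ n₁ n₂ p) (c : ℝ) : bvec p z.1 c = Finsupp.single z c := by
  rw [bvec, dif_pos z.2]
  exact Finsupp.smul_single_one _ _

@[simp] lemma bvec_zero (y : FLabel m₁ m₂ n₁ n₂) : bvec p y 0 = 0 := by
  unfold bvec; split_ifs <;> simp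

lemma smul_bvec (a c : ℝ) (y : FLabel m₁ m₂ n₁ n₂) : a • bvec p y c = bvec p y (a * c) := by
  unfold bvec; split_ifs <;> simp [smul_smul]

lemma bvec_sub (y : FLabel m₁ m₂ n₁ n₂) (c d : ℝ) :
    bvec p y c - bvec p y d = bvec p y (c - d) := by
  unfold bvec; split_ifs <;> simp [sub_smul]

lemma bvec_add (y : FLabel m₁ m₂ n₁ n₂) (c d : ℝ) :
    bvec p y c + bvec p y d = bvec p y (c + d) := by
  unfold bvec; split_ifs <;> simp [add_smul]

/-- `|x) ↦ c x |T x)`, where `|y) = 0` for an invalid label `y`. -/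
noncomputable def shiftOp (T : FLabel m₁ m₂ n₁ n₂ → FLabel m₁ m₂ n₁ n₂)
    (c : FLabel m₁ m₂ n₁ n₂ → ℝ) : Module.End ℝ (W m₁ m₂ n₁ n₂ p) :=
  extOp fun x => bvec p (T x.1) (c x.1)

variable {T T' : FLabel m₁ m₂ n₁ n₂ → FLabel m₁ m₂ n₁ n₂} {c c' : FLabel m₁ m₂ n₁ n₂ → ℝ}

lemma ext_single {A B : Module.End ℝ (W m₁ m₂ n₁ n₂ p)}
    (h : ∀ x, A (Finsupp.single x 1) = B (Finsupp.single x 1)) : A = B :=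
  Finsupp.basisSingleOne.ext fun x => by simpa using h x

lemma shiftOp_single (x : FIdx m₁ m₂ n₁ n₂ p) :
    shiftOp T c (Finsupp.single x 1) = bvec p (T x.1) (c x.1) := by
  simp [shiftOp, extOp]

lemma shiftOp_bvec (z : FIdx m₁ m₂ n₁ n₂ p) (d : ℝ) :
    shiftOp T c (bvec p z.1 d) = bvec p (T z.1) (d * c z.1) := by
  rw [bvec_val, ← Finsupp.smul_single_one, map_smul, shiftOp_single, smul_bvec]

lemma shiftOp_mul (h : ∀ x, x.Valid p → c' x ≠ 0 → (T' x).Valid p) :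
    shiftOp T c * shiftOp T' c' =
      shiftOp (p := p) (fun x => T (T' x)) (fun x => c' x * c (T' x)) := by
  refine ext_single fun x => ?_
  rw [Module.End.mul_apply, shiftOp_single, shiftOp_single]
  by_cases hc : c' x.1 = 0
  · simp [hc]
  · exact shiftOp_bvec ⟨_, h x.1 x.2 hc⟩ _

lemma shiftOp_congr (hc : ∀ x, x.Valid p → c x = c' x)
    (hT : ∀ x, x.Valid p → c x ≠ 0 → T x = T' x) : shiftOp (p := p) T c = shiftOp T' c' := by
  refine ext_single fun x => ?_
  rw [shiftOp_single, shiftOp_single, ← hc x.1 x.2]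
  by_cases h0 : c x.1 = 0
  · simp [h0]
  · rw [hT x.1 x.2 h0]

lemma shiftOp_add :
    shiftOp T c + shiftOp T c' = shiftOp (p := p) T (fun x => c x + c' x) :=
  ext_single fun x => by simp only [LinearMap.add_apply, shiftOp_single, bvec_add]

lemma smul_shiftOp (a : ℝ) : a • shiftOp T c = shiftOp (p := p) T (fun x => a * c x) :=
  ext_single fun x => by simp only [LinearMap.smul_apply, shiftOp_single, smul_bvec]

lemma shiftOp_sub :
    shiftOp T c - shiftOp T c' = shiftOp (p := p) T (fun x => c x - c' x) :=
  ext_single fun x => by simp only [LinearMap.sub_apply, shiftOp_single, bvec_sub]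

lemma shiftOp_zero : shiftOp (p := p) T (fun _ => 0) = 0 :=
  ext_single fun x => by simp [shiftOp_single]

noncomputable def totalFn (f : ℕ → ℝ) : Module.End ℝ (W m₁ m₂ n₁ n₂ p) :=
  shiftOp id fun x => f x.R

lemma totalFn_mul (f g : ℕ → ℝ) :
    totalFn f * totalFn g =
      totalFn (m₁ := m₁) (m₂ := m₂) (n₁ := n₁) (n₂ := n₂) (p := p) (f * g) := by
  rw [totalFn, totalFn, shiftOp_mul (T' := id) fun _ hx _ => hx]
  exact shiftOp_congr (fun x _ => mul_comm _ _) fun _ _ _ => rfl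

lemma totalFn_congr {f g : ℕ → ℝ} (h : ∀ n ≤ p, f n = g n) :
    totalFn (m₁ := m₁) (m₂ := m₂) (n₁ := n₁) (n₂ := n₂) (p := p) f = totalFn g :=
  shiftOp_congr (fun _ hx => h _ hx.2.2) fun _ _ _ => rfl

/-- The cut-off `R < p` makes the coefficient vanish wherever the raised label is invalid, as
`shiftOp_mul` requires. -/
noncomputable def creation (μ : FMode m₁ m₂ n₁ n₂) : Module.End ℝ (W m₁ m₂ n₁ n₂ p) :=
  shiftOp (·.raise μ) fun x => if x.R < p then x.raiseWeight μ else 0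

noncomputable def annihilation (μ : FMode m₁ m₂ n₁ n₂) : Module.End ℝ (W m₁ m₂ n₁ n₂ p) :=
  shiftOp (·.lower μ) (·.lowerWeight μ)

lemma valid_raise_of_ne_zero {x : FLabel m₁ m₂ n₁ n₂} (hx : x.Valid p)
    (h : (if x.R < p then x.raiseWeight μ else 0) ≠ 0) : (x.raise μ).Valid p := by
  split_ifs at h with hR
  · exact FLabel.valid_raise hx hR fun hμ => FLabel.occ_eq_zero_of_raiseWeight_ne_zero hx hμ h
  · exact absurd rfl h

lemma totalFn_mul_creation (f : ℕ → ℝ) :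
    totalFn f * creation μ = creation (p := p) μ * totalFn fun n => f (n + 1) := by
  rw [totalFn, totalFn, creation, shiftOp_mul fun x hx h => valid_raise_of_ne_zero hx h,
    shiftOp_mul (T' := id) fun _ hx _ => hx]
  exact shiftOp_congr (fun x _ => by simp [FLabel.R_raise, mul_comm]) fun _ _ _ => rfl

lemma totalFn_mul_annihilation (f : ℕ → ℝ) :
    (totalFn fun n => f (n + 1)) * annihilation μ = annihilation (p := p) μ * totalFn f := by
  rw [totalFn, totalFn, annihilation, shiftOp_mul fun x hx _ => FLabel.valid_lower hx,
    shiftOp_mul (T' := id) fun _ hx _ => hx]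
  refine shiftOp_congr (fun x _ => ?_) fun _ _ _ => rfl
  by_cases h : x.occ μ = 0
  · simp [FLabel.lowerWeight_eq_zero h]
  · simp [FLabel.R_lower h, mul_comm]

lemma creation_mul_creation (μ ν : FMode m₁ m₂ n₁ n₂) :
    creation μ * creation ν = sgn μ.deg ν.deg • (creation (p := p) ν * creation μ) := by
  rw [creation, creation, shiftOp_mul fun x hx h => valid_raise_of_ne_zero hx h,
    shiftOp_mul fun x hx h => valid_raise_of_ne_zero hx h, smul_shiftOp]
  by_cases hμν : μ = ν
  · subst hμν
    refine shiftOp_congr (fun x hx => ?_) fun _ _ _ => rfl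
    rw [FMode.sgn_deg_self]
    split_ifs <;> simp_all [FLabel.raiseWeight_mul_raiseWeight_raise hx]
  refine shiftOp_congr (fun x hx => ?_) fun x _ _ => FLabel.raise_raise_comm (Ne.symm hμν)
  simp only [FLabel.R_raise]
  split_ifs <;> try simp
  rw [FLabel.raiseWeight_raise_of_ne hμν, FLabel.raiseWeight_raise_of_ne (Ne.symm hμν),
    ← FMode.crossSign_mul_crossSign hμν]
  linear_combination (-(μ.crossSign ν) * x.raiseWeight μ * x.raiseWeight ν) *
    FMode.crossSign_mul_self (μ := ν) (ν := μ)

lemma annihilation_mul_annihilation (μ ν : FMode m₁ m₂ n₁ n₂) :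
    annihilation μ * annihilation ν =
      sgn μ.deg ν.deg • (annihilation (p := p) ν * annihilation μ) := by
  rw [annihilation, annihilation, shiftOp_mul fun x hx _ => FLabel.valid_lower hx,
    shiftOp_mul fun x hx _ => FLabel.valid_lower hx, smul_shiftOp]
  by_cases hμν : μ = ν
  · subst hμν
    refine shiftOp_congr (fun x hx => ?_) fun _ _ _ => rfl
    rw [FMode.sgn_deg_self]
    split_ifs <;> simp_all [FLabel.lowerWeight_mul_lowerWeight_lower hx]
  refine shiftOp_congr (fun x hx => ?_) fun x _ _ => FLabel.lower_lower_comm (Ne.symm hμν)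
  by_cases hμ : x.occ μ = 0
  · simp [FLabel.lowerWeight_eq_zero hμ, FLabel.lowerWeight_eq_zero
      (by rwa [FLabel.occ_lower_of_ne hμν] : (x.lower ν).occ μ = 0)]
  by_cases hν : x.occ ν = 0
  · simp [FLabel.lowerWeight_eq_zero hν, FLabel.lowerWeight_eq_zero
      (by rwa [FLabel.occ_lower_of_ne (Ne.symm hμν)] : (x.lower μ).occ ν = 0)]
  rw [FLabel.lowerWeight_lower_of_ne hμν hν, FLabel.lowerWeight_lower_of_ne (Ne.symm hμν) hμ,
    ← FMode.crossSign_mul_crossSign hμν]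
  linear_combination (-(μ.crossSign ν) * x.lowerWeight μ * x.lowerWeight ν) *
    FMode.crossSign_mul_self (μ := ν) (ν := μ)

lemma creation_mul_totalFn (f : ℕ → ℝ) :
    creation μ * totalFn f = shiftOp (p := p) (·.raise μ) fun x =>
      f x.R * if x.R < p then x.raiseWeight μ else 0 :=
  shiftOp_mul (T' := id) fun _ hx _ => hx

lemma annihilation_mul_totalFn (f : ℕ → ℝ) :
    annihilation μ * totalFn f = shiftOp (p := p) (·.lower μ) fun x => f x.R * x.lowerWeight μ :=
  shiftOp_mul (T' := id) fun _ hx _ => hx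

open Classical in
/-- The graded canonical commutation relations hold below the cut-off. -/
lemma ccr_mul_totalFn {f : ℕ → ℝ} (hf : f p = 0) :
    annihilation ν * (creation μ * totalFn f) -
        sgn μ.deg ν.deg • (creation μ * (annihilation ν * totalFn f)) =
      (if μ = ν then 1 else 0 : ℝ) • totalFn (p := p) f := by
  rw [creation_mul_totalFn, annihilation_mul_totalFn, annihilation, creation,
    shiftOp_mul (T' := (·.raise μ)) fun _ hx h =>
      valid_raise_of_ne_zero hx (right_ne_zero_of_mul h),
    shiftOp_mul (T' := (·.lower ν)) fun x hx _ => FLabel.valid_lower hx, smul_shiftOp]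
  by_cases hμν : μ = ν
  · subst hμν
    rw [if_pos rfl, one_smul,
      shiftOp_congr (T := fun x => (x.raise μ).lower μ) (T' := id) (fun _ _ => rfl)
        fun _ _ _ => FLabel.lower_raise,
      shiftOp_congr (T := fun x => (x.lower μ).raise μ) (T' := id) (fun _ _ => rfl)
        fun _ _ hc => FLabel.raise_lower fun h0 => hc ?_,
      shiftOp_sub]
    · refine shiftOp_congr (fun x hx => ?_) fun _ _ _ => rfl
      obtain hR | hR := lt_or_eq_of_le hx.2.2
      · rw [if_pos hR, if_pos ((FLabel.R_lower_le).trans_lt hR), mul_assoc,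
          FLabel.raiseWeight_mul_lowerWeight_raise hx, mul_assoc,
          FLabel.lowerWeight_mul_raiseWeight_lower hx]
        ring
      · simp [hR, hf]
    · simp [FLabel.lowerWeight_eq_zero h0]
  · rw [if_neg hμν, zero_smul,
      shiftOp_congr (T := fun x => (x.lower ν).raise μ) (T' := fun x => (x.raise μ).lower ν)
        (fun _ _ => rfl) fun _ _ _ => (FLabel.lower_raise_comm hμν).symm, shiftOp_sub]
    refine (shiftOp_congr (fun x hx => ?_) fun _ _ _ => rfl).trans shiftOp_zero
    obtain hR | hR := lt_or_eq_of_le hx.2.2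
    · by_cases hν : x.occ ν = 0
      · simp [FLabel.lowerWeight_eq_zero hν, FLabel.lowerWeight_raise_of_ne (Ne.symm hμν)]
      rw [if_pos hR, if_pos ((FLabel.R_lower_le).trans_lt hR),
        FLabel.lowerWeight_raise_of_ne (Ne.symm hμν), FLabel.raiseWeight_lower_of_ne hμν hν,
        ← FMode.crossSign_mul_crossSign hμν]
      linear_combination (-(f x.R * ν.crossSign μ * x.raiseWeight μ * x.lowerWeight ν)) *
        FMode.crossSign_mul_self (μ := μ) (ν := ν)
    · simp [hR, hf]

lemma totalFn_commute_annihilation_mul_creation (f : ℕ → ℝ) :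
    Commute (totalFn f) (annihilation ν * creation (p := p) μ) := by
  have hf : totalFn f = totalFn (m₁ := m₁) (m₂ := m₂) (n₁ := n₁) (n₂ := n₂) (p := p)
      fun n => f (n + 1 - 1) := by simp
  calc totalFn f * (annihilation ν * creation μ)
      = annihilation ν * (totalFn (fun m => f (m - 1)) * creation μ) := by
        rw [← mul_assoc, hf, totalFn_mul_annihilation (fun m => f (m - 1)), mul_assoc]
    _ = annihilation ν * creation μ * totalFn f := by
        rw [totalFn_mul_creation, ← mul_assoc, ← hf]

lemma aP_eq_shiftOp (i : Fin (m₁+m₂+n₁+n₂)) :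
    aP (p := p) i = shiftOp (·.raise (mode i)) fun x =>
      x.raiseWeight (mode i) * √((p - x.R : ℕ) : ℝ) := by
  unfold aP mode
  split_ifs <;> refine congrArg extOp (funext fun x => congrArg (bvec p _) ?_) <;>
    simp only [FLabel.raiseWeight, FMode.isFermion, FLabel.occ, FLabel.klein,
      FLabel.kleinExp, sgnl, sgnth, sgnla, pow_add, if_true, if_false, Bool.false_eq_true] <;>
    first | ring1 | (rw [Nat.cast_mul, Real.sqrt_mul (by positivity)]; push_cast; ring)

lemma aM_eq_shiftOp (i : Fin (m₁+m₂+n₁+n₂)) :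
    aM (p := p) i = shiftOp (·.lower (mode i)) fun x =>
      x.lowerWeight (mode i) * √((p - x.R + 1 : ℕ) : ℝ) := by
  unfold aM mode
  split_ifs <;> refine congrArg extOp (funext fun x => congrArg (bvec p _) ?_) <;>
    simp only [FLabel.lowerWeight, FMode.isFermion, FLabel.occ, FLabel.klein,
      FLabel.kleinExp, sgnl, sgnth, sgnla, pow_add, if_true, if_false, Bool.false_eq_true] <;>
    first | ring1 | (rw [Nat.cast_mul, Real.sqrt_mul (by positivity)])

lemma aP_eq_creation_mul (i : Fin (m₁+m₂+n₁+n₂)) :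
    aP (p := p) i = creation (mode i) * totalFn fun n => √((p : ℝ) - n) := by
  rw [aP_eq_shiftOp, creation_mul_totalFn]
  refine shiftOp_congr (fun x hx => ?_) fun _ _ _ => rfl
  obtain hR | hR := lt_or_eq_of_le hx.2.2
  · rw [if_pos hR, Nat.cast_sub hx.2.2, mul_comm]
  · simp [hR]

lemma aM_eq_mul_annihilation (i : Fin (m₁+m₂+n₁+n₂)) :
    aM (p := p) i = (totalFn fun n => √((p : ℝ) - n)) * annihilation (mode i) := by
  rw [aM_eq_shiftOp, totalFn, annihilation,
    shiftOp_mul (T' := (·.lower (mode i))) fun x hx _ => FLabel.valid_lower hx]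
  refine shiftOp_congr (fun x hx => ?_) fun _ _ _ => rfl
  by_cases h : x.occ (mode i) = 0
  · simp [FLabel.lowerWeight_eq_zero h]
  · have hR := FLabel.R_lower h
    have hp := hx.2.2
    rw [show ((p - x.R + 1 : ℕ) : ℝ) = p - ((x.lower (mode i)).R : ℕ) by
      rw [Nat.cast_add_one, Nat.cast_sub hp, ← hR]; push_cast; ring]

lemma gap_mul_creation :
    (totalFn (p := p) fun n => (p : ℝ) - n) * creation μ =
      creation μ * (totalFn fun n => (p : ℝ) - n) - creation μ := by
  rw [creation_mul_totalFn, totalFn, creation,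
    shiftOp_mul fun x hx h => valid_raise_of_ne_zero hx h, shiftOp_sub]
  refine shiftOp_congr (fun x _ => ?_) fun _ _ _ => rfl
  rw [FLabel.R_raise]; push_cast; ring

lemma gap_mul_annihilation :
    (totalFn (p := p) fun n => (p : ℝ) - n) * annihilation μ =
      annihilation μ * (totalFn fun n => (p : ℝ) - n) + annihilation μ := by
  rw [annihilation_mul_totalFn, totalFn, annihilation,
    shiftOp_mul fun x hx _ => FLabel.valid_lower hx, shiftOp_add]
  refine shiftOp_congr (fun x _ => ?_) fun _ _ _ => rfl
  by_cases h : x.occ μ = 0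
  · simp [FLabel.lowerWeight_eq_zero h]
  · rw [← FLabel.R_lower h]; push_cast; ring

theorem cutoffCCR : CutoffCCR (fun i j : Fin (m₁+m₂+n₁+n₂) => sgn (deg i) (deg j))
    (fun i => creation (p := p) (mode i)) (fun i => annihilation (mode i))
    (totalFn fun n => √((p : ℝ) - n)) (totalFn fun n => √((p : ℝ) - ↑(n + 1)))
    (totalFn fun n => (p : ℝ) - n) where
  sign_mul_self _ _ := sgn_mul_self _ _
  sign_comm _ _ := sgn_comm _ _
  q_mul_q := by
    rw [totalFn_mul]
    exact totalFn_congr fun n hn => Real.mul_self_sqrt (sub_nonneg.2 (by exact_mod_cast hn))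
  q_mul_c _ := totalFn_mul_creation _
  a_mul_q _ := (totalFn_mul_annihilation _).symm
  commute_q_ac _ _ := totalFn_commute_annihilation_mul_creation _
  g_mul_c _ := gap_mul_creation
  g_mul_a _ := gap_mul_annihilation
  c_mul_c i j := by simp only [deg_eq_deg_mode]; exact creation_mul_creation _ _
  a_mul_a i j := by simp only [deg_eq_deg_mode]; exact annihilation_mul_annihilation _ _
  ccr i j := by
    have h := ccr_mul_totalFn (μ := mode i) (ν := mode j) (p := p)
      (f := fun n => √((p : ℝ) - n)) (by simp)
    simp only [← deg_eq_deg_mode, mode_injective.eq_iff, ← mul_assoc, ← smul_mul_assoc] at h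
    refine Eq.trans ?_ h
    exact sub_mul (α := Module.End ℝ (W m₁ m₂ n₁ n₂ p)) _ _ _

lemma bb_eq_gradedBracket (a b : ZMod 2 × ZMod 2) (X Y : Module.End ℝ (W m₁ m₂ n₁ n₂ p)) :
    bb a b X Y = gradedBracket (sgn a b) X Y :=
  rfl

end Fock

theorem fock_operators_satisfy_triple_relations_general (m₁ m₂ n₁ n₂ p : ℕ) :
    ∀ i j k : Fin (m₁+m₂+n₁+n₂),
      (bb (deg i) (deg j) (aP (p := p) i) (aP j) = 0 ∧
       bb (deg i) (deg j) (aM (p := p) i) (aM j) = 0) ∧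
      bb (deg i + deg j) (deg k) (bb (deg i) (deg j) (aP (p := p) i) (aM j)) (aP k) =
        (if j = k then (1 : ℝ) else 0) • aP i +
          sgn (deg i) (deg i) • ((if i = j then (1 : ℝ) else 0) • aP k) ∧
      bb (deg i + deg j) (deg k) (bb (deg i) (deg j) (aP (p := p) i) (aM j)) (aM k) =
        -(sgn (deg i + deg j) (deg k) • ((if i = k then (1 : ℝ) else 0) • aM j)) -
          sgn (deg i) (deg i) • ((if i = j then (1 : ℝ) else 0) • aM k) := by
  intro i j k
  have h := Fock.cutoffCCR (m₁ := m₁) (m₂ := m₂) (n₁ := n₁) (n₂ := n₂) (p := p)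
  simp only [Fock.bb_eq_gradedBracket, sgn_add_left, Fock.aP_eq_creation_mul,
    Fock.aM_eq_mul_annihilation]
  exact ⟨⟨h.gradedBracket_creation i j, h.gradedBracket_annihilation i j⟩,
    h.gradedBracket_gradedBracket_creation i j k, h.gradedBracket_gradedBracket_annihilation i j k⟩

theorem fock_operators_satisfy_triple_relations (m₁ m₂ n₁ n₂ p : ℕ) (hp : 0 < p) :
    ∀ i j k : Fin (m₁+m₂+n₁+n₂),
      (bb (deg i) (deg j) (aP (p := p) i) (aP j) = 0 ∧
       bb (deg i) (deg j) (aM (p := p) i) (aM j) = 0) ∧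
      bb (deg i + deg j) (deg k) (bb (deg i) (deg j) (aP (p := p) i) (aM j)) (aP k) =
        (if j = k then (1 : ℝ) else 0) • aP i +
          sgn (deg i) (deg i) • ((if i = j then (1 : ℝ) else 0) • aP k) ∧
      bb (deg i + deg j) (deg k) (bb (deg i) (deg j) (aP (p := p) i) (aM j)) (aM k) =
        -(sgn (deg i + deg j) (deg k) • ((if i = k then (1 : ℝ) else 0) • aM j)) -
          sgn (deg i) (deg i) • ((if i = j then (1 : ℝ) else 0) • aM k) :=
  fock_operators_satisfy_triple_relations_general m₁ m₂ n₁ n₂ p
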